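/- Let s ∈ (0,1), H an open affine half-space in R^N, and φ ∈ H^s(R^N) nonnegative. Then the polarization φ_H satisfies [φ_H]_s² ≤ [φ]_s², where [u]_s² = ∫∫_{R^N×R^N} |u(x)−u(y)|²/|x−y|^{N+2s} dx dy. -/

import Mathlib

open MeasureTheory Set
open scoped ENNReal
noncomputable section

/-- Euclidean space `ℝ^N`. -/
abbrev Euc (N : ℕ) := EuclideanSpace ℝ (Fin N)

/-- Reflection `σ_H` across the hyperplane `∂H = {x | ⟪a, x⟫ = c}` (for a unit vector `a`). -/
def reflectH {N : ℕ} (a : Euc N) (c : ℝ) (x : Euc N) : Euc N :=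
  x - (2 * ((inner ℝ a x : ℝ) - c)) • a

/-- The open affine half-space `H = {x | ⟪a, x⟫ > c}`. -/
def halfSpace {N : ℕ} (a : Euc N) (c : ℝ) : Set (Euc N) :=
  {x | c < (inner ℝ a x : ℝ)}

/-- Polarization `Ω_H = ((Ω ∪ σ_H(Ω)) ∩ H) ∪ (Ω ∩ σ_H(Ω))` of a set `Ω`. -/
def polSet {N : ℕ} (a : Euc N) (c : ℝ) (Ω : Set (Euc N)) : Set (Euc N) :=
  ((Ω ∪ reflectH a c '' Ω) ∩ halfSpace a c) ∪ (Ω ∩ reflectH a c '' Ω)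

/-- Polarization `f_H` of a function: `max(f, f∘σ_H)` on `H`, `min(f, f∘σ_H)` on `H^c`. -/
def polFun {N : ℕ} (a : Euc N) (c : ℝ) (f : Euc N → ℝ) (x : Euc N) : ℝ :=
  if c < (inner ℝ a x : ℝ) then max (f x) (f (reflectH a c x))
  else min (f x) (f (reflectH a c x))

/-- Square of the Gagliardo seminorm `[u]_s²`. -/
def gagliardo2 (N : ℕ) (s : ℝ) (u : Euc N → ℝ) : ℝ :=
  ∫ p : Euc N × Euc N, (u p.1 - u p.2) ^ 2 / ‖p.1 - p.2‖ ^ ((N : ℝ) + 2 * s)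

/-- Finiteness of the Gagliardo seminorm. -/
def gagliardoFinite (N : ℕ) (s : ℝ) (u : Euc N → ℝ) : Prop :=
  Integrable (fun p : Euc N × Euc N => (u p.1 - u p.2) ^ 2 / ‖p.1 - p.2‖ ^ ((N : ℝ) + 2 * s))

/-- Membership in the fractional Sobolev space `H^s(ℝ^N)`. -/
def memHs (N : ℕ) (s : ℝ) (u : Euc N → ℝ) : Prop :=
  MemLp u 2 (volume : Measure (Euc N)) ∧ gagliardoFinite N s u

/-- Membership in `H^s_0(Ω) = {u ∈ H^s(ℝ^N) : u = 0 in Ω^c}`. -/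
def memHs0 (N : ℕ) (s : ℝ) (Ω : Set (Euc N)) (u : Euc N → ℝ) : Prop :=
  memHs N s u ∧ ∀ x ∉ Ω, u x = 0

variable {N : ℕ} {a : Euc N} {c : ℝ}

lemma inner_reflectH (ha : ‖a‖ = 1) (x : Euc N) :
    (inner ℝ a (reflectH a c x) : ℝ) = 2 * c - inner ℝ a x := by
  have haa : (inner ℝ a a : ℝ) = 1 := by
    rw [real_inner_self_eq_norm_sq, ha]; norm_num
  rw [reflectH, inner_sub_right, real_inner_smul_right, haa]; ring

lemma reflectH_invol (ha : ‖a‖ = 1) (x : Euc N) :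
    reflectH a c (reflectH a c x) = x := by
  rw [reflectH, inner_reflectH ha, reflectH]
  module

lemma reflectH_fixed {x : Euc N} (h : (inner ℝ a x : ℝ) = c) : reflectH a c x = x := by
  simp [reflectH, h]

lemma polFun_eq_max (φ : Euc N → ℝ) {x : Euc N} (h : c ≤ (inner ℝ a x : ℝ)) :
    polFun a c φ x = max (φ x) (φ (reflectH a c x)) := by
  rcases lt_or_eq_of_le h with h' | h'
  · rw [polFun, if_pos h']
  · rw [polFun, if_neg (by rw [← h']; exact lt_irrefl c), reflectH_fixed h'.symm,
      min_self, max_self]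

lemma polFun_eq_min (φ : Euc N → ℝ) {x : Euc N} (h : (inner ℝ a x : ℝ) ≤ c) :
    polFun a c φ x = min (φ x) (φ (reflectH a c x)) := by
  rw [polFun, if_neg (not_lt.2 h)]

lemma polFun_reflect_eq_min (ha : ‖a‖ = 1) (φ : Euc N → ℝ) {x : Euc N}
    (h : c ≤ (inner ℝ a x : ℝ)) :
    polFun a c φ (reflectH a c x) = min (φ x) (φ (reflectH a c x)) := by
  rw [polFun_eq_min φ (by rw [inner_reflectH ha]; linarith), reflectH_invol ha, min_comm]

lemma polFun_reflect_eq_max (ha : ‖a‖ = 1) (φ : Euc N → ℝ) {x : Euc N}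
    (h : (inner ℝ a x : ℝ) ≤ c) :
    polFun a c φ (reflectH a c x) = max (φ x) (φ (reflectH a c x)) := by
  rw [polFun_eq_max φ (by rw [inner_reflectH ha]; linarith), reflectH_invol ha, max_comm]

lemma sq_polFun_diff (ha : ‖a‖ = 1) (φ : Euc N → ℝ) (x : Euc N) :
    (polFun a c φ x - polFun a c φ (reflectH a c x)) ^ 2
      = (φ x - φ (reflectH a c x)) ^ 2 := by
  rcases le_total c (inner ℝ a x : ℝ) with h | h
  · rw [polFun_eq_max φ h, polFun_reflect_eq_min ha φ h]
    rcases le_total (φ x) (φ (reflectH a c x)) with h2 | h2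
    · rw [max_eq_right h2, min_eq_left h2]; ring
    · rw [max_eq_left h2, min_eq_right h2]
  · rw [polFun_eq_min φ h, polFun_reflect_eq_max ha φ h]
    rcases le_total (φ x) (φ (reflectH a c x)) with h2 | h2
    · rw [max_eq_right h2, min_eq_left h2]
    · rw [max_eq_left h2, min_eq_right h2]; ring

lemma norm_sub_reflectH_sq (ha : ‖a‖ = 1) (x y : Euc N) :
    ‖x - reflectH a c y‖ ^ 2
      = ‖x - y‖ ^ 2 + 4 * ((inner ℝ a x : ℝ) - c) * ((inner ℝ a y : ℝ) - c) := by
  have hxy : x - reflectH a c y = (x - y) + (2 * ((inner ℝ a y : ℝ) - c)) • a := by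
    rw [reflectH]; module
  have h2 : (inner ℝ (x - y) a : ℝ) = inner ℝ a x - inner ℝ a y := by
    rw [real_inner_comm, inner_sub_right]
  rw [hxy, norm_add_sq_real, real_inner_smul_right, norm_smul, mul_pow, ha, h2,
    Real.norm_eq_abs, sq_abs]
  ring

lemma norm_reflectH_sub_reflectH (ha : ‖a‖ = 1) (x y : Euc N) :
    ‖reflectH a c x - reflectH a c y‖ = ‖x - y‖ := by
  have h1 := norm_sub_reflectH_sq (c := c) ha (reflectH a c x) y
  have h2 := norm_sub_reflectH_sq (c := c) ha y x
  rw [inner_reflectH ha] at h1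
  rw [← norm_neg (y - reflectH a c x), neg_sub] at h2
  have hsq : ‖reflectH a c x - reflectH a c y‖ ^ 2 = ‖x - y‖ ^ 2 := by
    rw [h1, h2, ← norm_neg (y - x), neg_sub]; ring
  rw [← Real.sqrt_sq (norm_nonneg _), ← Real.sqrt_sq (norm_nonneg (x - y)), hsq]

lemma norm_reflectH_sub (ha : ‖a‖ = 1) (x y : Euc N) :
    ‖reflectH a c x - y‖ = ‖x - reflectH a c y‖ := by
  conv_lhs => rw [← reflectH_invol (c := c) ha y]
  rw [norm_reflectH_sub_reflectH ha]

private lemma fourpt (K1 K2 α β γ δ : ℝ) (h0 : 0 ≤ K2) (h : K2 ≤ K1) :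
    K1 * ((max α β - max γ δ) ^ 2 + (min α β - min γ δ) ^ 2)
      + K2 * ((max α β - min γ δ) ^ 2 + (min α β - max γ δ) ^ 2)
    ≤ K1 * ((α - γ) ^ 2 + (β - δ) ^ 2) + K2 * ((α - δ) ^ 2 + (β - γ) ^ 2) := by
  rcases le_total α β with h1 | h1 <;> rcases le_total γ δ with h2 | h2
  · rw [max_eq_right h1, min_eq_left h1, max_eq_right h2, min_eq_left h2]; nlinarith
  · rw [max_eq_right h1, min_eq_left h1, max_eq_left h2, min_eq_right h2]
    nlinarith [mul_nonneg (mul_nonneg (sub_nonneg.2 h) (sub_nonneg.2 h1)) (sub_nonneg.2 h2)]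
  · rw [max_eq_left h1, min_eq_right h1, max_eq_right h2, min_eq_left h2]
    nlinarith [mul_nonneg (mul_nonneg (sub_nonneg.2 h) (sub_nonneg.2 h1)) (sub_nonneg.2 h2)]
  · rw [max_eq_left h1, min_eq_right h1, max_eq_left h2, min_eq_right h2]

lemma key_pointwise (ha : ‖a‖ = 1) {pw : ℝ} (hpw : 0 < pw) (φ : Euc N → ℝ) (x y : Euc N) :
    (polFun a c φ x - polFun a c φ y) ^ 2 / ‖x - y‖ ^ pw
      + (polFun a c φ (reflectH a c x) - polFun a c φ (reflectH a c y)) ^ 2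
          / ‖reflectH a c x - reflectH a c y‖ ^ pw
      + (polFun a c φ x - polFun a c φ (reflectH a c y)) ^ 2 / ‖x - reflectH a c y‖ ^ pw
      + (polFun a c φ (reflectH a c x) - polFun a c φ y) ^ 2 / ‖reflectH a c x - y‖ ^ pw
    ≤ (φ x - φ y) ^ 2 / ‖x - y‖ ^ pw
      + (φ (reflectH a c x) - φ (reflectH a c y)) ^ 2 / ‖reflectH a c x - reflectH a c y‖ ^ pw
      + (φ x - φ (reflectH a c y)) ^ 2 / ‖x - reflectH a c y‖ ^ pw
      + (φ (reflectH a c x) - φ y) ^ 2 / ‖reflectH a c x - y‖ ^ pw := by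
  rw [norm_reflectH_sub_reflectH ha, norm_reflectH_sub ha]
  have hflip : ∀ u v : ℝ, (u - v) ^ 2 = (v - u) ^ 2 := fun u v => by ring
  by_cases hxy : x = y
  · subst hxy
    have h1 := sq_polFun_diff (c := c) ha φ x
    have h2 : (polFun a c φ (reflectH a c x) - polFun a c φ x) ^ 2
        = (φ (reflectH a c x) - φ x) ^ 2 := by rw [hflip, h1, hflip]
    rw [h1, h2]
    simp
  · by_cases hxsy : x = reflectH a c y
    · have hsx : reflectH a c x = y := by rw [hxsy, reflectH_invol ha]
      have h1 := sq_polFun_diff (c := c) ha φ x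
      rw [hsx] at h1
      have h2 : (polFun a c φ y - polFun a c φ x) ^ 2 = (φ y - φ x) ^ 2 := by
        rw [hflip, h1, hflip]
      rw [← hxsy, hsx, h1, h2]
      simp
    · -- main case
      have hn1 : (0 : ℝ) < ‖x - y‖ := by
        rw [norm_pos_iff]; exact sub_ne_zero.2 hxy
      have hn2 : (0 : ℝ) < ‖x - reflectH a c y‖ := by
        rw [norm_pos_iff]; exact sub_ne_zero.2 hxsy
      set D1 := ‖x - y‖ ^ pw with hD1
      set D2 := ‖x - reflectH a c y‖ ^ pw with hD2
      have hD1p : 0 < D1 := Real.rpow_pos_of_pos hn1 pw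
      have hD2p : 0 < D2 := Real.rpow_pos_of_pos hn2 pw
      have hsq := norm_sub_reflectH_sq (c := c) ha x y
      have hcmp : 0 ≤ ((inner ℝ a x : ℝ) - c) * ((inner ℝ a y : ℝ) - c) → D2⁻¹ ≤ D1⁻¹ := by
        intro h
        have hsq' : ‖x - y‖ ^ 2 ≤ ‖x - reflectH a c y‖ ^ 2 := by nlinarith
        have hle : ‖x - y‖ ≤ ‖x - reflectH a c y‖ := by
          have h2 := Real.sqrt_le_sqrt hsq'
          rwa [Real.sqrt_sq (norm_nonneg _), Real.sqrt_sq (norm_nonneg _)] at h2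
        exact inv_anti₀ hD1p (Real.rpow_le_rpow (norm_nonneg _) hle hpw.le)
      have hcmp' : ((inner ℝ a x : ℝ) - c) * ((inner ℝ a y : ℝ) - c) ≤ 0 → D1⁻¹ ≤ D2⁻¹ := by
        intro h
        have hsq' : ‖x - reflectH a c y‖ ^ 2 ≤ ‖x - y‖ ^ 2 := by nlinarith
        have hle : ‖x - reflectH a c y‖ ≤ ‖x - y‖ := by
          have h2 := Real.sqrt_le_sqrt hsq'
          rwa [Real.sqrt_sq (norm_nonneg _), Real.sqrt_sq (norm_nonneg _)] at h2
        exact inv_anti₀ hD2p (Real.rpow_le_rpow (norm_nonneg _) hle hpw.le)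
      simp only [div_eq_mul_inv]
      rcases le_total c (inner ℝ a x : ℝ) with hx | hx <;>
        rcases le_total c (inner ℝ a y : ℝ) with hy | hy
      · rw [polFun_eq_max φ hx, polFun_reflect_eq_min ha φ hx,
          polFun_eq_max φ hy, polFun_reflect_eq_min ha φ hy]
        have h4 := fourpt D1⁻¹ D2⁻¹ (φ x) (φ (reflectH a c x)) (φ y) (φ (reflectH a c y))
          (le_of_lt (inv_pos.2 hD2p)) (hcmp (by nlinarith))
        linarith
      · rw [polFun_eq_max φ hx, polFun_reflect_eq_min ha φ hx,
          polFun_eq_min φ hy, polFun_reflect_eq_max ha φ hy]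
        have h4 := fourpt D2⁻¹ D1⁻¹ (φ x) (φ (reflectH a c x)) (φ (reflectH a c y)) (φ y)
          (le_of_lt (inv_pos.2 hD1p)) (hcmp' (by nlinarith))
        rw [max_comm (φ (reflectH a c y)) (φ y), min_comm (φ (reflectH a c y)) (φ y)] at h4
        linarith
      · rw [polFun_eq_min φ hx, polFun_reflect_eq_max ha φ hx,
          polFun_eq_max φ hy, polFun_reflect_eq_min ha φ hy]
        have h4 := fourpt D2⁻¹ D1⁻¹ (φ (reflectH a c x)) (φ x) (φ y) (φ (reflectH a c y))
          (le_of_lt (inv_pos.2 hD1p)) (hcmp' (by nlinarith))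
        rw [max_comm (φ (reflectH a c x)) (φ x), min_comm (φ (reflectH a c x)) (φ x)] at h4
        linarith
      · rw [polFun_eq_min φ hx, polFun_reflect_eq_max ha φ hx,
          polFun_eq_min φ hy, polFun_reflect_eq_max ha φ hy]
        have h4 := fourpt D1⁻¹ D2⁻¹ (φ x) (φ (reflectH a c x)) (φ y) (φ (reflectH a c y))
          (le_of_lt (inv_pos.2 hD2p)) (hcmp (by nlinarith))
        linarith

lemma reflectH_eq_comp (ha : ‖a‖ = 1) :
    reflectH a c = fun x => (Submodule.reflection (ℝ ∙ a)ᗮ x) + (2 * c) • a := by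
  funext x
  rw [Submodule.reflection_orthogonal_apply, Submodule.reflection_singleton_apply, ha]
  rw [reflectH]
  push_cast
  simp only [one_pow, div_one, two_smul, smul_smul]
  module

lemma measurePreserving_reflectH (ha : ‖a‖ = 1) :
    MeasurePreserving (reflectH a c) (volume : Measure (Euc N)) volume := by
  rw [reflectH_eq_comp ha]
  exact (measurePreserving_add_right volume ((2 * c) • a)).comp
    (LinearIsometryEquiv.measurePreserving _)

lemma continuous_reflectH : Continuous (reflectH a c) := by
  have h1 : Continuous fun x : Euc N => (2 * ((inner ℝ a x : ℝ) - c)) :=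
    continuous_const.mul ((continuous_const.inner continuous_id).sub continuous_const)
  exact continuous_id.sub (h1.smul continuous_const)

theorem gagliardo_polarization_le'
    {N : ℕ} (s : ℝ) (hs : s ∈ Set.Ioo (0 : ℝ) 1)
    (a : Euc N) (c : ℝ) (ha : ‖a‖ = 1)
    (φ : Euc N → ℝ) (hφ : MemLp φ 2 (volume : Measure (Euc N)) ∧
      Integrable (fun p : Euc N × Euc N =>
        (φ p.1 - φ p.2) ^ 2 / ‖p.1 - p.2‖ ^ ((N : ℝ) + 2 * s))) :
    (∫ p : Euc N × Euc N, (polFun a c φ p.1 - polFun a c φ p.2) ^ 2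
        / ‖p.1 - p.2‖ ^ ((N : ℝ) + 2 * s))
      ≤ ∫ p : Euc N × Euc N, (φ p.1 - φ p.2) ^ 2 / ‖p.1 - p.2‖ ^ ((N : ℝ) + 2 * s) := by
  obtain ⟨hs0, -⟩ := hs
  set pw : ℝ := (N : ℝ) + 2 * s with hpwdef
  have hpw : 0 < pw := by
    have hN : (0 : ℝ) ≤ (N : ℝ) := Nat.cast_nonneg N
    rw [hpwdef]; linarith
  set σ : Euc N → Euc N := reflectH a c with hσdef
  set ψ : Euc N → ℝ := polFun a c φ with hψdef
  set F : Euc N × Euc N → ℝ := fun p => (φ p.1 - φ p.2) ^ 2 / ‖p.1 - p.2‖ ^ pw with hFdef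
  set G : Euc N × Euc N → ℝ := fun p => (ψ p.1 - ψ p.2) ^ 2 / ‖p.1 - p.2‖ ^ pw with hGdef
  -- measure-preserving maps
  have hmpσ : MeasurePreserving σ (volume : Measure (Euc N)) volume :=
    measurePreserving_reflectH ha
  have hσcont : Continuous σ := continuous_reflectH
  have hσinj : Function.Injective σ :=
    Function.LeftInverse.injective (g := σ) (fun x => reflectH_invol ha x)
  have hembσ : MeasurableEmbedding σ := hσcont.measurableEmbedding hσinj
  have hT1 : MeasurePreserving (fun p : Euc N × Euc N => (σ p.1, σ p.2))
      (volume : Measure (Euc N × Euc N)) volume := by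
    rw [Measure.volume_eq_prod]; exact hmpσ.prod hmpσ
  have hT2 : MeasurePreserving (fun p : Euc N × Euc N => (p.1, σ p.2))
      (volume : Measure (Euc N × Euc N)) volume := by
    rw [Measure.volume_eq_prod]; exact (MeasurePreserving.id volume).prod hmpσ
  have hT3 : MeasurePreserving (fun p : Euc N × Euc N => (σ p.1, p.2))
      (volume : Measure (Euc N × Euc N)) volume := by
    rw [Measure.volume_eq_prod]; exact hmpσ.prod (MeasurePreserving.id volume)
  have hembT1 : MeasurableEmbedding (fun p : Euc N × Euc N => (σ p.1, σ p.2)) := by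
    refine Continuous.measurableEmbedding ?_ ?_
    · exact (hσcont.comp continuous_fst).prodMk (hσcont.comp continuous_snd)
    · intro p q h
      have h1 := congrArg Prod.fst h
      have h2 := congrArg Prod.snd h
      exact Prod.ext (hσinj h1) (hσinj h2)
  have hembT2 : MeasurableEmbedding (fun p : Euc N × Euc N => (p.1, σ p.2)) := by
    refine Continuous.measurableEmbedding ?_ ?_
    · exact continuous_fst.prodMk (hσcont.comp continuous_snd)
    · intro p q h
      have h1 := congrArg Prod.fst h
      have h2 := congrArg Prod.snd h
      exact Prod.ext h1 (hσinj h2)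
  have hembT3 : MeasurableEmbedding (fun p : Euc N × Euc N => (σ p.1, p.2)) := by
    refine Continuous.measurableEmbedding ?_ ?_
    · exact (hσcont.comp continuous_fst).prodMk continuous_snd
    · intro p q h
      have h1 := congrArg Prod.fst h
      have h2 := congrArg Prod.snd h
      exact Prod.ext (hσinj h1) h2
  -- integrability of F and its reflected versions
  have hFint : Integrable F (volume : Measure (Euc N × Euc N)) := hφ.2
  have hF1 : Integrable (fun p : Euc N × Euc N => F (σ p.1, σ p.2)) volume :=
    (hT1.integrable_comp_emb hembT1).2 hFint
  have hF2 : Integrable (fun p : Euc N × Euc N => F (p.1, σ p.2)) volume :=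
    (hT2.integrable_comp_emb hembT2).2 hFint
  have hF3 : Integrable (fun p : Euc N × Euc N => F (σ p.1, p.2)) volume :=
    (hT3.integrable_comp_emb hembT3).2 hFint
  have hFsym : Integrable
      (fun p : Euc N × Euc N => F p + F (σ p.1, σ p.2) + F (p.1, σ p.2) + F (σ p.1, p.2))
      volume := ((hFint.add hF1).add hF2).add hF3
  -- a.e. strong measurability of G
  have hφae : AEStronglyMeasurable φ (volume : Measure (Euc N)) := hφ.1.1
  have hφσae : AEStronglyMeasurable (fun x => φ (σ x)) (volume : Measure (Euc N)) :=
    hφae.comp_measurePreserving hmpσ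
  have hmaxae : AEStronglyMeasurable (fun x => max (φ x) (φ (σ x)))
      (volume : Measure (Euc N)) := hφae.sup hφσae
  have hminae : AEStronglyMeasurable (fun x => min (φ x) (φ (σ x)))
      (volume : Measure (Euc N)) := hφae.inf hφσae
  have hψae : AEStronglyMeasurable ψ (volume : Measure (Euc N)) := by
    have hset : MeasurableSet {x : Euc N | c < (inner ℝ a x : ℝ)} :=
      measurableSet_lt measurable_const (continuous_const.inner continuous_id).measurable
    have hψeq : ψ = Set.piecewise {x : Euc N | c < (inner ℝ a x : ℝ)}
        (fun x => max (φ x) (φ (σ x))) (fun x => min (φ x) (φ (σ x))) := by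
      funext x
      by_cases h : c < (inner ℝ a x : ℝ) <;>
        simp [hψdef, polFun, Set.piecewise, h, hσdef]
    rw [hψeq]
    exact AEStronglyMeasurable.piecewise hset hmaxae.restrict hminae.restrict
  have hq1 : Measure.QuasiMeasurePreserving (Prod.fst : Euc N × Euc N → Euc N)
      volume volume := by
    rw [Measure.volume_eq_prod]; exact Measure.quasiMeasurePreserving_fst
  have hq2 : Measure.QuasiMeasurePreserving (Prod.snd : Euc N × Euc N → Euc N)
      volume volume := by
    rw [Measure.volume_eq_prod]; exact Measure.quasiMeasurePreserving_snd
  have hψ1 : AEStronglyMeasurable (fun p : Euc N × Euc N => ψ p.1) volume :=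
    hψae.comp_quasiMeasurePreserving hq1
  have hψ2 : AEStronglyMeasurable (fun p : Euc N × Euc N => ψ p.2) volume :=
    hψae.comp_quasiMeasurePreserving hq2
  have hnum : AEStronglyMeasurable (fun p : Euc N × Euc N => (ψ p.1 - ψ p.2) ^ 2) volume := by
    have h2 : (fun p : Euc N × Euc N => (ψ p.1 - ψ p.2) ^ 2)
        = fun p => (ψ p.1 - ψ p.2) * (ψ p.1 - ψ p.2) := by funext p; ring
    rw [h2]
    exact (hψ1.sub hψ2).mul (hψ1.sub hψ2)
  have hden : Continuous (fun p : Euc N × Euc N => ‖p.1 - p.2‖ ^ pw) :=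
    ((continuous_fst.sub continuous_snd).norm).rpow_const (fun x => Or.inr hpw.le)
  have hdeninv : AEStronglyMeasurable (fun p : Euc N × Euc N => (‖p.1 - p.2‖ ^ pw)⁻¹)
      (volume : Measure (Euc N × Euc N)) :=
    (measurable_inv.comp hden.measurable).aestronglyMeasurable
  have hGae : AEStronglyMeasurable G (volume : Measure (Euc N × Euc N)) := by
    have h3 : G = fun p : Euc N × Euc N =>
        (ψ p.1 - ψ p.2) ^ 2 * (‖p.1 - p.2‖ ^ pw)⁻¹ := by
      funext p; rw [hGdef]; exact div_eq_mul_inv _ _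
    rw [h3]
    exact hnum.mul hdeninv
  -- pointwise inequality
  have hGnn : ∀ p : Euc N × Euc N, 0 ≤ G p := fun p =>
    div_nonneg (sq_nonneg _) (Real.rpow_nonneg (norm_nonneg _) _)
  have key : ∀ p : Euc N × Euc N,
      G p + G (σ p.1, σ p.2) + G (p.1, σ p.2) + G (σ p.1, p.2)
        ≤ F p + F (σ p.1, σ p.2) + F (p.1, σ p.2) + F (σ p.1, p.2) := fun p =>
    key_pointwise ha hpw φ p.1 p.2
  -- integrability of G
  have hGbound : ∀ p : Euc N × Euc N,
      ‖G p‖ ≤ F p + F (σ p.1, σ p.2) + F (p.1, σ p.2) + F (σ p.1, p.2) := by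
    intro p
    rw [Real.norm_eq_abs, abs_of_nonneg (hGnn p)]
    have h1 := hGnn (σ p.1, σ p.2)
    have h2 := hGnn (p.1, σ p.2)
    have h3 := hGnn (σ p.1, p.2)
    have h := key p
    linarith
  have hGint : Integrable G (volume : Measure (Euc N × Euc N)) :=
    hFsym.mono' hGae (Filter.Eventually.of_forall hGbound)
  have hG1 : Integrable (fun p : Euc N × Euc N => G (σ p.1, σ p.2)) volume :=
    (hT1.integrable_comp_emb hembT1).2 hGint
  have hG2 : Integrable (fun p : Euc N × Euc N => G (p.1, σ p.2)) volume :=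
    (hT2.integrable_comp_emb hembT2).2 hGint
  have hG3 : Integrable (fun p : Euc N × Euc N => G (σ p.1, p.2)) volume :=
    (hT3.integrable_comp_emb hembT3).2 hGint
  have hGsym : Integrable
      (fun p : Euc N × Euc N => G p + G (σ p.1, σ p.2) + G (p.1, σ p.2) + G (σ p.1, p.2))
      volume := ((hGint.add hG1).add hG2).add hG3
  -- integral identities
  have eG1 : (∫ p : Euc N × Euc N, G (σ p.1, σ p.2)) = ∫ p, G p := hT1.integral_comp hembT1 G
  have eG2 : (∫ p : Euc N × Euc N, G (p.1, σ p.2)) = ∫ p, G p := hT2.integral_comp hembT2 G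
  have eG3 : (∫ p : Euc N × Euc N, G (σ p.1, p.2)) = ∫ p, G p := hT3.integral_comp hembT3 G
  have eF1 : (∫ p : Euc N × Euc N, F (σ p.1, σ p.2)) = ∫ p, F p := hT1.integral_comp hembT1 F
  have eF2 : (∫ p : Euc N × Euc N, F (p.1, σ p.2)) = ∫ p, F p := hT2.integral_comp hembT2 F
  have eF3 : (∫ p : Euc N × Euc N, F (σ p.1, p.2)) = ∫ p, F p := hT3.integral_comp hembT3 F
  have hg01 : Integrable (fun p : Euc N × Euc N => G p + G (σ p.1, σ p.2)) volume :=
    hGint.add hG1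
  have hg012 : Integrable
      (fun p : Euc N × Euc N => G p + G (σ p.1, σ p.2) + G (p.1, σ p.2)) volume := hg01.add hG2
  have hGsum : (∫ p : Euc N × Euc N,
      (G p + G (σ p.1, σ p.2) + G (p.1, σ p.2) + G (σ p.1, p.2))) = 4 * ∫ p, G p := by
    rw [integral_add hg012 hG3, integral_add hg01 hG2,
      integral_add hGint hG1, eG1, eG2, eG3]
    ring
  have hf01 : Integrable (fun p : Euc N × Euc N => F p + F (σ p.1, σ p.2)) volume :=
    hFint.add hF1
  have hf012 : Integrable
      (fun p : Euc N × Euc N => F p + F (σ p.1, σ p.2) + F (p.1, σ p.2)) volume := hf01.add hF2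
  have hFsum : (∫ p : Euc N × Euc N,
      (F p + F (σ p.1, σ p.2) + F (p.1, σ p.2) + F (σ p.1, p.2))) = 4 * ∫ p, F p := by
    rw [integral_add hf012 hF3, integral_add hf01 hF2,
      integral_add hFint hF1, eF1, eF2, eF3]
    ring
  have hmono := integral_mono hGsym hFsym key
  rw [hGsum, hFsum] at hmono
  linarith

/-- For `s ∈ (0,1)` and nonnegative `φ ∈ H^s(ℝ^N)`, the
polarization satisfies `[φ_H]_s² ≤ [φ]_s²`. -/
theorem gagliardo_polarization_le
    {N : ℕ} (s : ℝ) (hs : s ∈ Set.Ioo (0 : ℝ) 1)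
    (a : Euc N) (c : ℝ) (ha : ‖a‖ = 1)
    (φ : Euc N → ℝ) (hφ : memHs N s φ) (hφ0 : ∀ x, 0 ≤ φ x) :
    gagliardo2 N s (polFun a c φ) ≤ gagliardo2 N s φ :=
  gagliardo_polarization_le' s hs a c ha φ hφ

end
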